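/- arXiv:1910.02817 — 2 statements merged into one kernel-verified Lean document; each statement's English description precedes it below -/
import Mathlib

section
/- Let k ≥ 1 be an integer and let r_0, …, r_k be distinct integers. Then there exists an integer M ≥ 1 such that for every real number ξ there is at least one index i ∈ {0, 1, …, k} with r_i ≠ ξ for which the point ξ_i = 1/(M(ξ − r_i)) satisfies ω_k^lead(ξ_i) = ω_k(ξ_i) = ω_k(ξ). -/
open Polynomial Filter

/-- The height (maximum absolute value of coefficients) of an integer polynomial,
as a real number. -/
noncomputable def intPolyNorm (P : Polynomial ℤ) : ℝ :=
  ((P.support.sup fun i => (P.coeff i).natAbs : ℕ) : ℝ)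

/-- The height (maximum absolute value of coefficients) of a real polynomial. -/
noncomputable def realPolyNorm (P : Polynomial ℝ) : ℝ :=
  (Finset.range (P.natDegree + 1)).sup' Finset.nonempty_range_add_one fun i => |P.coeff i|

/-- The maximum norm of an integer vector, as a real number. -/
noncomputable def vecNorm {n : ℕ} (x : Fin (n + 1) → ℤ) : ℝ :=
  ((Finset.univ.sup fun i => (x i).natAbs : ℕ) : ℝ)

/-- The exponent `ω_n(ξ)`: the supremum (in `EReal`) of all `ω ∈ ℝ` for which there are
infinitely many nonzero `P ∈ ℤ[x]` with `deg P ≤ n` and `|P(ξ)| ≤ ‖P‖ ^ (-ω)`. -/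
noncomputable def omegaExp (n : ℕ) (ξ : ℝ) : EReal :=
  sSup (Real.toEReal '' {ω : ℝ |
    {P : Polynomial ℤ | P ≠ 0 ∧ P.natDegree ≤ n ∧
      |Polynomial.aeval ξ P| ≤ intPolyNorm P ^ (-ω)}.Infinite})

/-- The exponent `ω_n^lead(ξ)`: as `ω_n(ξ)`, but restricted to polynomials whose
coefficient of `x^n` has absolute value equal to the height. -/
noncomputable def omegaLeadExp (n : ℕ) (ξ : ℝ) : EReal :=
  sSup (Real.toEReal '' {ω : ℝ |
    {P : Polynomial ℤ | P ≠ 0 ∧ P.natDegree ≤ n ∧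
      ((P.coeff n).natAbs : ℝ) = intPolyNorm P ∧
      |Polynomial.aeval ξ P| ≤ intPolyNorm P ^ (-ω)}.Infinite})

/-- The exponent `λ_n(ξ)`: the supremum (in `EReal`) of all `λ ∈ ℝ` for which there are
infinitely many nonzero `x = (x_0, …, x_n) ∈ ℤ^{n+1}` with
`max_{1 ≤ m ≤ n} |x_0 ξ^m − x_m| ≤ ‖x‖ ^ (−λ)`. -/
noncomputable def lambdaExp (n : ℕ) (ξ : ℝ) : EReal :=
  sSup (Real.toEReal '' {l : ℝ |
    {x : Fin (n + 1) → ℤ | x ≠ 0 ∧ ∀ m : Fin (n + 1), 1 ≤ (m : ℕ) →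
      |(x 0 : ℝ) * ξ ^ (m : ℕ) - (x m : ℝ)| ≤ vecNorm x ^ (-l)}.Infinite})

/-- The polynomial `Q(x) = (Mx)^k · P(1/(Mx) + r)`, i.e. `∑_{j=0}^{k} a_j M^{k−j} x^{k−j}`
where `P(x + r) = ∑_j a_j x^j`. -/
noncomputable def Qpoly (k : ℕ) (M : ℤ) (r : ℤ) (P : Polynomial ℤ) : Polynomial ℤ :=
  ∑ j ∈ Finset.range (k + 1),
    Polynomial.C ((P.comp (Polynomial.X + Polynomial.C r)).coeff j * M ^ (k - j)) *
      Polynomial.X ^ (k - j)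

/-!
Put `ξᵢ = 1/(M(ξ - rᵢ))` and `Qᵢ(P)(x) = (Mx)^k P(1/(Mx) + rᵢ)` (`Qpoly`), so that
`Qᵢ(P)(ξᵢ) (ξ - rᵢ)^k = P(ξ)`. On polynomials of degree `≤ k`, `Qᵢ` and
`Q ↦ (M(x - rᵢ))^k Q(1/(M(x - rᵢ)))` are integral linear maps whose composite is `M^k`, so both
change heights by at most a bounded factor. The second one turns good approximations of `ξᵢ`
into good approximations of `ξ`, whence `ω_k(ξᵢ) ≤ ω_k(ξ)` for every `i`.

Conversely, since the `rᵢ` are `k + 1` distinct points, each `P` of degree `≤ k` has an index `i`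
with `H(P) ≪ |P(rᵢ)|`. Then the constant coefficient `P(rᵢ)` of `P(x + rᵢ)` dominates its other
coefficients up to a constant, and once `M` exceeds that constant the coefficient `P(rᵢ) M^k` of
`x^k` in `Qᵢ(P)` is the largest one. Pigeonholing the approximations of `ξ` over `i` gives
`ω_k(ξ) ≤ ω_k^lead(ξᵢ)` for some `i`, which closes the chain
`ω_k^lead(ξᵢ) ≤ ω_k(ξᵢ) ≤ ω_k(ξ) ≤ ω_k^lead(ξᵢ)`. If `ξ = r_{i₀}`, then `ξ` is an integer and
every other `ξᵢ` is the inverse of an integer, so all three exponents are infinite.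
-/

lemma intPolyNorm_nonneg (P : ℤ[X]) : 0 ≤ intPolyNorm P := Nat.cast_nonneg _

lemma intPolyNorm_zero : intPolyNorm 0 = 0 := by
  simp [intPolyNorm]

lemma natAbs_coeff_le_intPolyNorm (P : ℤ[X]) (j : ℕ) :
    ((P.coeff j).natAbs : ℝ) ≤ intPolyNorm P := by
  by_cases h : j ∈ P.support
  · exact Nat.cast_le.mpr (Finset.le_sup (f := fun i => (P.coeff i).natAbs) h)
  · simp [notMem_support_iff.mp h, intPolyNorm_nonneg]

lemma intPolyNorm_le_of_forall {P : ℤ[X]} {c : ℝ} (hc : 0 ≤ c)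
    (h : ∀ j, ((P.coeff j).natAbs : ℝ) ≤ c) : intPolyNorm P ≤ c :=
  (Nat.cast_le.mpr (Finset.sup_le fun j _ => Nat.le_floor (h j))).trans (Nat.floor_le hc)

lemma one_le_intPolyNorm {P : ℤ[X]} (hP : P ≠ 0) : 1 ≤ intPolyNorm P := by
  obtain ⟨j, hj⟩ := nonempty_support_iff.mpr hP
  exact (Nat.one_le_cast.mpr (Int.natAbs_pos.mpr (mem_support_iff.mp hj))).trans
    (natAbs_coeff_le_intPolyNorm P j)

lemma intPolyNorm_add_le (P Q : ℤ[X]) :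
    intPolyNorm (P + Q) ≤ intPolyNorm P + intPolyNorm Q :=
  intPolyNorm_le_of_forall (add_nonneg (intPolyNorm_nonneg P) (intPolyNorm_nonneg Q)) fun j => by
    rw [coeff_add]
    refine (Nat.cast_le.mpr (Int.natAbs_add_le _ _)).trans ?_
    push_cast
    exact add_le_add (natAbs_coeff_le_intPolyNorm P j) (natAbs_coeff_le_intPolyNorm Q j)

lemma intPolyNorm_sum_le {ι : Type*} (s : Finset ι) (f : ι → ℤ[X]) :
    intPolyNorm (∑ i ∈ s, f i) ≤ ∑ i ∈ s, intPolyNorm (f i) :=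
  Finset.le_sum_of_subadditive _ intPolyNorm_zero.le intPolyNorm_add_le s f

lemma intPolyNorm_zsmul_le (n : ℤ) (P : ℤ[X]) :
    intPolyNorm (n • P) ≤ (n.natAbs : ℝ) * intPolyNorm P :=
  intPolyNorm_le_of_forall (mul_nonneg (Nat.cast_nonneg _) (intPolyNorm_nonneg P)) fun j => by
    rw [coeff_smul, smul_eq_mul, Int.natAbs_mul, Nat.cast_mul]
    exact mul_le_mul_of_nonneg_left (natAbs_coeff_le_intPolyNorm P j) (Nat.cast_nonneg _)

lemma intPolyNorm_le_intPolyNorm_zsmul {n : ℤ} (hn : n ≠ 0) (P : ℤ[X]) :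
    intPolyNorm P ≤ intPolyNorm (n • P) :=
  intPolyNorm_le_of_forall (intPolyNorm_nonneg _) fun j => by
    refine (Nat.cast_le.mpr ?_).trans (natAbs_coeff_le_intPolyNorm _ j)
    rw [coeff_smul, smul_eq_mul, Int.natAbs_mul]
    exact Nat.le_mul_of_pos_left _ (Int.natAbs_pos.mpr hn)

lemma finite_setOf_natDegree_le_intPolyNorm_le (k : ℕ) (R : ℝ) :
    {P : ℤ[X] | P.natDegree ≤ k ∧ intPolyNorm P ≤ R}.Finite := by
  set N : ℤ := ↑⌊R⌋₊
  refine Set.Finite.of_finite_image (f := fun P (j : Fin (k + 1)) => P.coeff j)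
    ((Set.finite_Icc (fun _ => -N) fun _ => N).subset ?_) ?_
  · rintro _ ⟨P, ⟨-, hPR⟩, rfl⟩
    have hcoeff (j : Fin (k + 1)) : |P.coeff j| ≤ N := by
      rw [← Int.natCast_natAbs, Int.ofNat_le]
      exact Nat.le_floor ((natAbs_coeff_le_intPolyNorm P j).trans hPR)
    exact ⟨fun j => (abs_le.mp (hcoeff j)).1, fun j => (abs_le.mp (hcoeff j)).2⟩
  · intro P hP Q hQ hPQ
    exact (ext_iff_natDegree_le hP.1 hQ.1).mpr fun i hi => congrFun hPQ ⟨i, by omega⟩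

lemma norm_coeff_eq_intPolyNorm {k : ℕ} {P : ℤ[X]} (hP : P.natDegree ≤ k) :
    ‖fun j : Fin (k + 1) => (P.coeff j : ℝ)‖ = intPolyNorm P := by
  have hnorm (j : ℕ) : ‖(P.coeff j : ℝ)‖ = (P.coeff j).natAbs := by
    rw [Real.norm_eq_abs, Nat.cast_natAbs, Int.cast_abs]
  apply le_antisymm
  · exact (pi_norm_le_iff_of_nonneg (intPolyNorm_nonneg P)).mpr fun j =>
      (hnorm j).trans_le (natAbs_coeff_le_intPolyNorm P j)
  · refine intPolyNorm_le_of_forall (norm_nonneg _) fun j => ?_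
    by_cases hj : j ≤ k
    · exact (hnorm j).symm.trans_le
        (norm_le_pi_norm (fun j : Fin (k + 1) => (P.coeff j : ℝ)) ⟨j, by omega⟩)
    · simp [coeff_eq_zero_of_natDegree_lt (hP.trans_lt (not_le.mp hj))]

lemma intPolyNorm_map_le (T : ℤ[X] →ₗ[ℤ] ℤ[X]) {k : ℕ} {P : ℤ[X]} (hP : P.natDegree ≤ k) :
    intPolyNorm (T P) ≤
      (∑ j ∈ Finset.range (k + 1), intPolyNorm (T (X ^ j))) * intPolyNorm P := by
  have hP' : P = ∑ j ∈ Finset.range (k + 1), P.coeff j • X ^ j := by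
    simpa only [smul_X_eq_monomial] using as_sum_range' P (k + 1) (by omega)
  calc intPolyNorm (T P)
      = intPolyNorm (∑ j ∈ Finset.range (k + 1), P.coeff j • T (X ^ j)) := by
        conv_lhs => rw [hP', map_sum]
        simp only [map_smul]
    _ ≤ ∑ j ∈ Finset.range (k + 1), intPolyNorm (P.coeff j • T (X ^ j)) :=
        intPolyNorm_sum_le _ _
    _ ≤ ∑ j ∈ Finset.range (k + 1), intPolyNorm (T (X ^ j)) * intPolyNorm P :=
        Finset.sum_le_sum fun j _ => (intPolyNorm_zsmul_le _ _).trans <| by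
          rw [mul_comm]
          exact mul_le_mul_of_nonneg_left (natAbs_coeff_le_intPolyNorm P j) (intPolyNorm_nonneg _)
    _ = _ := (Finset.sum_mul ..).symm

def HeightComparable (k : ℕ) (T : ℤ[X] → ℤ[X]) : Prop :=
  Set.InjOn T {P | P.natDegree ≤ k} ∧ ∃ c : ℝ, ∀ P : ℤ[X], P.natDegree ≤ k →
    (T P).natDegree ≤ k ∧ intPolyNorm P ≤ c * intPolyNorm (T P) ∧
      intPolyNorm (T P) ≤ c * intPolyNorm P

lemma heightComparable_of_leftInverse (T S : ℤ[X] →ₗ[ℤ] ℤ[X]) {d : ℤ} (hd : d ≠ 0) {k : ℕ}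
    (hT : ∀ P : ℤ[X], P.natDegree ≤ k → (T P).natDegree ≤ k)
    (hST : ∀ P : ℤ[X], P.natDegree ≤ k → S (T P) = d • P) : HeightComparable k T := by
  refine ⟨fun P hP P' hP' h => smul_right_injective ℤ[X] hd ?_, ?_⟩
  · show d • P = d • P'
    rw [← hST P hP, ← hST P' hP', h]
  set cS := ∑ j ∈ Finset.range (k + 1), intPolyNorm (S (X ^ j))
  set cT := ∑ j ∈ Finset.range (k + 1), intPolyNorm (T (X ^ j))
  refine ⟨max cS cT, fun P hP => ⟨hT P hP, ?_, ?_⟩⟩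
  · calc intPolyNorm P ≤ intPolyNorm (S (T P)) :=
          hST P hP ▸ intPolyNorm_le_intPolyNorm_zsmul hd P
      _ ≤ cS * intPolyNorm (T P) := intPolyNorm_map_le S (hT P hP)
      _ ≤ _ := mul_le_mul_of_nonneg_right (le_max_left _ _) (intPolyNorm_nonneg _)
  · exact (intPolyNorm_map_le T hP).trans
      (mul_le_mul_of_nonneg_right (le_max_right _ _) (intPolyNorm_nonneg _))

namespace Polynomial

variable {R : Type*} [CommRing R]

lemma aeval_taylor {A : Type*} [CommRing A] [Algebra R A] (r : R) (p : R[X]) (x : A) :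
    aeval x (taylor r p) = aeval (x + algebraMap R A r) p := by
  simp [taylor_apply, aeval_comp]

/-- `(M X)^k p(1/(M X))` for `p` of degree `≤ k`: the reflection `reflect k p` evaluated at
`M X`. -/
noncomputable def scaledReflect (k : ℕ) (M : R) : R[X] →ₗ[R] R[X] where
  toFun p := ∑ j ∈ Finset.range (k + 1), C (p.coeff j * M ^ (k - j)) * X ^ (k - j)
  map_add' p q := by simp only [coeff_add, add_mul, C_add, Finset.sum_add_distrib]
  map_smul' a p := by
    simp only [RingHom.id_apply, Finset.smul_sum, smul_eq_C_mul, coeff_C_mul, mul_assoc, C_mul]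

lemma coeff_scaledReflect (k : ℕ) (M : R) (p : R[X]) (m : ℕ) :
    (scaledReflect k M p).coeff m = if m ≤ k then p.coeff (k - m) * M ^ m else 0 := by
  simp only [scaledReflect, LinearMap.coe_mk, AddHom.coe_mk, finsetSum_coeff,
    coeff_C_mul_X_pow]
  split_ifs with hm
  · rw [Finset.sum_eq_single (k - m) (fun j hj hjm => if_neg (by rw [Finset.mem_range] at hj; omega))
      (by simp), if_pos (by omega), Nat.sub_sub_self hm]
  · exact Finset.sum_eq_zero fun j _ => if_neg (by omega)

lemma natDegree_scaledReflect_le (k : ℕ) (M : R) (p : R[X]) :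
    (scaledReflect k M p).natDegree ≤ k :=
  natDegree_le_iff_coeff_eq_zero.mpr fun m hm => by
    rw [coeff_scaledReflect, if_neg (by exact_mod_cast hm.not_ge)]

lemma scaledReflect_scaledReflect {k : ℕ} (M : R) {p : R[X]} (hp : p.natDegree ≤ k) :
    scaledReflect k M (scaledReflect k M p) = M ^ k • p := by
  ext m
  rw [coeff_scaledReflect, coeff_smul, smul_eq_mul]
  split_ifs with hm
  · rw [coeff_scaledReflect, if_pos (Nat.sub_le k m), Nat.sub_sub_self hm, mul_assoc,
      ← pow_add, Nat.sub_add_cancel hm, mul_comm]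
  · rw [coeff_eq_zero_of_natDegree_lt (hp.trans_lt (not_le.mp hm)), mul_zero]

lemma aeval_scaledReflect_mul_pow {A : Type*} [CommRing A] [Algebra R A] {k : ℕ} {M : R}
    {p : R[X]} (hp : p.natDegree ≤ k) {x y : A} (hxy : algebraMap R A M * x * y = 1) :
    aeval x (scaledReflect k M p) * y ^ k = aeval y p := by
  rw [aeval_eq_sum_range' (n := k + 1) (by omega) y]
  simp only [scaledReflect, LinearMap.coe_mk, AddHom.coe_mk, map_sum, map_mul, aeval_C,
    map_pow, aeval_X, Finset.sum_mul]
  refine Finset.sum_congr rfl fun j hj => ?_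
  have hjk : j ≤ k := Nat.lt_succ_iff.mp (Finset.mem_range.mp hj)
  calc algebraMap R A (p.coeff j) * algebraMap R A M ^ (k - j) * x ^ (k - j) * y ^ k
      = algebraMap R A (p.coeff j) * (algebraMap R A M * x * y) ^ (k - j) * y ^ j := by
        rw [← Nat.sub_add_cancel hjk, pow_add, Nat.add_sub_cancel]
        ring
    _ = p.coeff j • y ^ j := by rw [hxy, one_pow, mul_one, Algebra.smul_def]

end Polynomial

lemma Qpoly_eq_scaledReflect_taylor (k : ℕ) (M r : ℤ) (P : ℤ[X]) :
    Qpoly k M r P = scaledReflect k M (taylor r P) := rfl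

lemma heightComparable_Qpoly (k : ℕ) {M : ℤ} (hM : M ≠ 0) (r : ℤ) :
    HeightComparable k (Qpoly k M r) := by
  rw [show Qpoly k M r = (scaledReflect k M).comp (taylor r) from
    funext (Qpoly_eq_scaledReflect_taylor k M r)]
  refine heightComparable_of_leftInverse _ ((taylor (-r)).comp (scaledReflect k M))
    (pow_ne_zero k hM) (fun P _ => natDegree_scaledReflect_le k M (taylor r P)) fun P hP => ?_
  simp only [LinearMap.comp_apply]
  rw [scaledReflect_scaledReflect M ((natDegree_taylor P r).trans_le hP), map_smul,
    taylor_taylor, neg_add_cancel, taylor_zero]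

lemma heightComparable_taylor_scaledReflect (k : ℕ) {M : ℤ} (hM : M ≠ 0) (r : ℤ) :
    HeightComparable k fun Q => taylor (-r) (scaledReflect k M Q) := by
  refine heightComparable_of_leftInverse ((taylor (-r)).comp (scaledReflect k M))
    ((scaledReflect k M).comp (taylor r)) (pow_ne_zero k hM)
    (fun Q _ => (natDegree_taylor _ _).trans_le (natDegree_scaledReflect_le k M Q))
    fun Q hQ => ?_
  simp only [LinearMap.comp_apply]
  rw [taylor_taylor, add_neg_cancel, taylor_zero, scaledReflect_scaledReflect M hQ]

lemma aeval_Qpoly_mul_pow {k : ℕ} {M r : ℤ} {P : ℤ[X]} (hP : P.natDegree ≤ k) {ξ η : ℝ}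
    (h : (M : ℝ) * η * (ξ - r) = 1) :
    aeval η (Qpoly k M r P) * (ξ - r) ^ k = aeval ξ P := by
  rw [Qpoly_eq_scaledReflect_taylor, aeval_scaledReflect_mul_pow
    ((natDegree_taylor P r).trans_le hP) (by simpa using h), aeval_taylor]
  simp

lemma aeval_taylor_scaledReflect_mul_pow {k : ℕ} {M r : ℤ} {Q : ℤ[X]} (hQ : Q.natDegree ≤ k)
    {ξ η : ℝ} (h : (M : ℝ) * η * (ξ - r) = 1) :
    aeval ξ (taylor (-r) (scaledReflect k M Q)) * η ^ k = aeval η Q := by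
  have hx : ξ + algebraMap ℤ ℝ (-r) = ξ - r := by simp [sub_eq_add_neg]
  rw [aeval_taylor, hx, aeval_scaledReflect_mul_pow hQ (by simpa [mul_right_comm] using h)]

lemma natAbs_coeff_Qpoly_eq_intPolyNorm {k : ℕ} {M r : ℤ} (hM : 1 ≤ M) {P : ℤ[X]}
    (hP : intPolyNorm (taylor r P) ≤ M * |((P.eval r : ℤ) : ℝ)|) :
    (((Qpoly k M r P).coeff k).natAbs : ℝ) = intPolyNorm (Qpoly k M r P) := by
  have hM' : (1 : ℝ) ≤ M := by exact_mod_cast hM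
  have hMabs : (M.natAbs : ℝ) = M := by
    rw [Nat.cast_natAbs, Int.cast_abs, abs_of_pos (by linarith)]
  set a : ℝ := |((P.eval r : ℤ) : ℝ)|
  have htaylor (j : ℕ) : (((taylor r P).coeff j).natAbs : ℝ) ≤ (M : ℝ) ^ j * a := by
    rcases j.eq_zero_or_pos with rfl | hj
    · simp [a, taylor_coeff_zero, Nat.cast_natAbs, Int.cast_abs]
    · exact (natAbs_coeff_le_intPolyNorm _ j).trans (hP.trans
        (mul_le_mul_of_nonneg_right (le_self_pow₀ hM' hj.ne') (abs_nonneg _)))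
  have hcoeff (m : ℕ) : (((Qpoly k M r P).coeff m).natAbs : ℝ) =
      if m ≤ k then ((taylor r P).coeff (k - m)).natAbs * (M : ℝ) ^ m else 0 := by
    rw [Qpoly_eq_scaledReflect_taylor, coeff_scaledReflect]
    split_ifs
    · rw [Int.natAbs_mul, Int.natAbs_pow, Nat.cast_mul, Nat.cast_pow, hMabs]
    · simp
  have hk : (((Qpoly k M r P).coeff k).natAbs : ℝ) = (M : ℝ) ^ k * a := by
    rw [hcoeff, if_pos le_rfl, Nat.sub_self, taylor_coeff_zero, Nat.cast_natAbs, Int.cast_abs,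
      mul_comm]
  refine le_antisymm (natAbs_coeff_le_intPolyNorm _ _)
    (intPolyNorm_le_of_forall (by positivity) fun m => ?_)
  rw [hcoeff m, hk]
  split_ifs with hm
  · calc _ ≤ (M : ℝ) ^ (k - m) * a * (M : ℝ) ^ m :=
          mul_le_mul_of_nonneg_right (htaylor _) (by positivity)
      _ = (M : ℝ) ^ k * a := by rw [mul_right_comm, ← pow_add, Nat.sub_add_cancel hm]
  · positivity

lemma exists_intPolyNorm_le_mul_abs_eval {k : ℕ} {r : Fin (k + 1) → ℤ}
    (hr : Function.Injective r) :
    ∃ C : ℝ, 0 ≤ C ∧ ∀ P : ℤ[X], P.natDegree ≤ k →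
      ∃ i, intPolyNorm P ≤ C * |((P.eval (r i) : ℤ) : ℝ)| := by
  set V := Matrix.vandermonde fun i => (r i : ℝ)
  have hV : Function.Injective V.mulVecLin :=
    Matrix.mulVec_injective_iff_isUnit.mpr <| (Matrix.isUnit_iff_isUnit_det V).mpr <|
      (Matrix.det_vandermonde_ne_zero_iff.mpr (Int.cast_injective.comp hr)).isUnit
  obtain ⟨K, -, hK⟩ := V.mulVecLin.exists_antilipschitzWith (LinearMap.ker_eq_bot.mpr hV)
  refine ⟨K, K.coe_nonneg, fun P hP => ?_⟩
  set v := fun j : Fin (k + 1) => (P.coeff j : ℝ)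
  have hVv (i : Fin (k + 1)) : V.mulVecLin v i = ((P.eval (r i) : ℤ) : ℝ) := by
    rw [← eq_intCast (algebraMap ℤ ℝ), ← aeval_algebraMap_apply_eq_algebraMap_eval, eq_intCast,
      aeval_eq_sum_range' (n := k + 1) (by omega), ← Fin.sum_univ_eq_sum_range]
    simp [V, v, Matrix.mulVec, dotProduct, Matrix.vandermonde_apply, mul_comm]
  obtain ⟨i, hi⟩ := Finite.exists_max fun i => |((P.eval (r i) : ℤ) : ℝ)|
  refine ⟨i, ?_⟩
  calc intPolyNorm P = ‖v‖ := (norm_coeff_eq_intPolyNorm hP).symm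
    _ ≤ K * ‖V.mulVecLin v‖ := hK.le_mul_norm (map_zero _) v
    _ ≤ K * |((P.eval (r i) : ℤ) : ℝ)| := by
        gcongr
        exact (pi_norm_le_iff_of_nonneg (abs_nonneg _)).mpr fun j => by
          rw [hVv, Real.norm_eq_abs]
          exact hi j

lemma exists_intPolyNorm_taylor_le_mul_abs_eval {k : ℕ} {r : Fin (k + 1) → ℤ}
    (hr : Function.Injective r) :
    ∃ M : ℤ, 1 ≤ M ∧ ∀ P : ℤ[X], P.natDegree ≤ k →
      ∃ i, intPolyNorm (taylor (r i) P) ≤ M * |((P.eval (r i) : ℤ) : ℝ)| := by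
  obtain ⟨C, hC0, hC⟩ := exists_intPolyNorm_le_mul_abs_eval hr
  set c : Fin (k + 1) → ℝ :=
    fun i => ∑ j ∈ Finset.range (k + 1), intPolyNorm (taylor (r i) (X ^ j))
  have hc0 (i : Fin (k + 1)) : 0 ≤ c i := Finset.sum_nonneg fun _ _ => intPolyNorm_nonneg _
  set B := ∑ i, c i
  have hcB (i : Fin (k + 1)) : c i ≤ B :=
    Finset.single_le_sum (fun i _ => hc0 i) (Finset.mem_univ i)
  refine ⟨⌈B * C⌉₊ + 1, by omega, fun P hP => ?_⟩
  obtain ⟨i, hi⟩ := hC P hP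
  refine ⟨i, ?_⟩
  calc intPolyNorm (taylor (r i) P) ≤ c i * intPolyNorm P := intPolyNorm_map_le _ hP
    _ ≤ B * (C * |((P.eval (r i) : ℤ) : ℝ)|) :=
        mul_le_mul (hcB i) hi (intPolyNorm_nonneg _) ((hc0 i).trans (hcB i))
    _ ≤ _ := by
        rw [← mul_assoc]
        refine mul_le_mul_of_nonneg_right ?_ (abs_nonneg _)
        push_cast
        linarith [Nat.le_ceil (B * C)]

lemma Real.rpow_neg_le_mul_rpow_neg {a b c : ℝ} (ha : 0 < a) (hb : 0 < b) (hab : a ≤ c * b)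
    (hba : b ≤ c * a) (ω : ℝ) : a ^ (-ω) ≤ c ^ |ω| * b ^ (-ω) := by
  have hc : 0 < c := pos_of_mul_pos_left (ha.trans_le hab) hb.le
  rcases le_or_gt 0 ω with hω | hω
  · calc a ^ (-ω) ≤ (b / c) ^ (-ω) :=
          Real.rpow_le_rpow_of_nonpos (div_pos hb hc) ((div_le_iff₀' hc).mpr hba) (by linarith)
      _ = c ^ |ω| * b ^ (-ω) := by
          rw [Real.div_rpow hb.le hc.le, Real.rpow_neg hc.le, abs_of_nonneg hω, div_inv_eq_mul,
            mul_comm]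
  · calc a ^ (-ω) ≤ (c * b) ^ (-ω) := Real.rpow_le_rpow ha.le hab (by linarith)
      _ = c ^ |ω| * b ^ (-ω) := by rw [Real.mul_rpow hc.le hb.le, abs_of_neg hω]

/-- `omegaExp k ξ` is by definition `sSup (Real.toEReal '' {ω | (approxSet k ξ ω).Infinite})`. -/
def approxSet (k : ℕ) (ξ ω : ℝ) : Set ℤ[X] :=
  {P | P ≠ 0 ∧ P.natDegree ≤ k ∧ |aeval ξ P| ≤ intPolyNorm P ^ (-ω)}

lemma HeightComparable.infinite_image_inter_approxSet {k : ℕ} {T : ℤ[X] → ℤ[X]}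
    (hT : HeightComparable k T) {ξ η ω ω' cv : ℝ} {A : Set ℤ[X]} (hA : A ⊆ approxSet k ξ ω)
    (hAinf : A.Infinite) (hcv : 0 ≤ cv) (hv : ∀ P ∈ A, |aeval η (T P)| ≤ cv * |aeval ξ P|)
    (hω : ω' < ω) : (T '' A ∩ approxSet k η ω').Infinite := by
  obtain ⟨hinj, c, hc⟩ := hT
  set K := cv * c ^ |ω|
  -- past height `R`, the factor `H ^ (ω - ω')` absorbs the constant `K`
  set R := max K 1 ^ (ω - ω')⁻¹
  refine ((hAinf.image (hinj.mono fun P hP => (hA hP).2.1)).sdiff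
    (finite_setOf_natDegree_le_intPolyNorm_le k R)).mono ?_
  rintro _ ⟨⟨P, hPA, rfl⟩, hbig⟩
  obtain ⟨hP0, hPk, hPξ⟩ := hA hPA
  obtain ⟨hdeg, hPT, hTP⟩ := hc P hPk
  have hPpos : 0 < intPolyNorm P := zero_lt_one.trans_le (one_le_intPolyNorm hP0)
  have hTpos : 0 < intPolyNorm (T P) := (intPolyNorm_nonneg _).lt_of_ne fun h => by
    rw [← h, mul_zero] at hPT
    linarith
  have hR : R < intPolyNorm (T P) := by
    by_contra! h
    exact hbig ⟨hdeg, h⟩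
  have hK : K ≤ intPolyNorm (T P) ^ (ω - ω') :=
    calc K ≤ max K 1 := le_max_left _ _
      _ = R ^ (ω - ω') := (Real.rpow_inv_rpow (by positivity) (by linarith)).symm
      _ ≤ _ := Real.rpow_le_rpow (by positivity) hR.le (by linarith)
  refine ⟨⟨P, hPA, rfl⟩, fun h => by simp [h, intPolyNorm_zero] at hTpos, hdeg, ?_⟩
  calc |aeval η (T P)| ≤ cv * |aeval ξ P| := hv P hPA
    _ ≤ cv * intPolyNorm P ^ (-ω) := mul_le_mul_of_nonneg_left hPξ hcv
    _ ≤ cv * (c ^ |ω| * intPolyNorm (T P) ^ (-ω)) :=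
        mul_le_mul_of_nonneg_left (Real.rpow_neg_le_mul_rpow_neg hPpos hTpos hPT hTP ω) hcv
    _ = K * intPolyNorm (T P) ^ (-ω) := by ring
    _ ≤ intPolyNorm (T P) ^ (ω - ω') * intPolyNorm (T P) ^ (-ω) :=
        mul_le_mul_of_nonneg_right hK (by positivity)
    _ = intPolyNorm (T P) ^ (-ω') := by rw [← Real.rpow_add hTpos]; ring_nf

lemma sSup_image_toEReal_le_of_forall_lt {A B : Set ℝ} (h : ∀ ω ∈ A, ∀ ω' < ω, ω' ∈ B) :
    sSup (Real.toEReal '' A) ≤ sSup (Real.toEReal '' B) := by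
  refine sSup_le ?_
  rintro _ ⟨ω, hω, rfl⟩
  refine le_of_forall_lt fun z hz => ?_
  obtain ⟨ω', hzω', hω'ω⟩ := EReal.exists_between_coe_real hz
  exact hzω'.trans_le (le_sSup ⟨ω', h ω hω ω' (EReal.coe_lt_coe_iff.mp hω'ω), rfl⟩)

lemma sSup_image_toEReal_le_iSup_of_forall_lt {ι : Type*} {A : Set ℝ} {B : ι → Set ℝ}
    (h : ∀ ω ∈ A, ∀ ω' < ω, ∃ i, ω' ∈ B i) :
    sSup (Real.toEReal '' A) ≤ ⨆ i, sSup (Real.toEReal '' B i) := by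
  rw [← sSup_iUnion, ← Set.image_iUnion]
  exact sSup_image_toEReal_le_of_forall_lt fun ω hω ω' hω' =>
    Set.mem_iUnion.mpr (h ω hω ω' hω')

lemma sSup_image_toEReal_eq_top {A : Set ℝ} (h : ∀ ω, ω ∈ A) :
    sSup (Real.toEReal '' A) = ⊤ := by
  refine sSup_eq_top.mpr fun b hb => ?_
  obtain ⟨ω, hbω, -⟩ := EReal.exists_between_coe_real hb
  exact ⟨ω, ⟨ω, h ω, rfl⟩, hbω⟩

lemma omegaLeadExp_le_omegaExp (k : ℕ) (ξ : ℝ) : omegaLeadExp k ξ ≤ omegaExp k ξ :=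
  sSup_le_sSup <| Set.image_mono fun _ hω => hω.mono fun _ hP => ⟨hP.1, hP.2.1, hP.2.2.2⟩

lemma infinite_range_succ_zsmul {P : ℤ[X]} (hP : P ≠ 0) :
    (Set.range fun n : ℕ => ((n : ℤ) + 1) • P).Infinite :=
  Set.infinite_range_of_injective <| (smul_left_injective ℤ hP).comp fun m n h => by
    simpa using h

lemma omegaExp_eq_top_of_aeval_eq_zero {k : ℕ} {ξ : ℝ} {P : ℤ[X]} (hP : P ≠ 0)
    (hPk : P.natDegree ≤ k) (hPξ : aeval ξ P = 0) : omegaExp k ξ = ⊤ :=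
  sSup_image_toEReal_eq_top fun _ => (infinite_range_succ_zsmul hP).mono <| by
    rintro _ ⟨n, rfl⟩
    refine ⟨smul_ne_zero (by omega) hP, (natDegree_smul_le _ _).trans hPk, ?_⟩
    rw [map_zsmul, hPξ, smul_zero, abs_zero]
    exact Real.rpow_nonneg (intPolyNorm_nonneg _) _

lemma omegaLeadExp_eq_top_of_aeval_eq_zero {k : ℕ} {ξ : ℝ} {P : ℤ[X]} (hP : P ≠ 0)
    (hPk : P.natDegree ≤ k) (hlead : ((P.coeff k).natAbs : ℝ) = intPolyNorm P)
    (hPξ : aeval ξ P = 0) : omegaLeadExp k ξ = ⊤ :=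
  sSup_image_toEReal_eq_top fun _ => (infinite_range_succ_zsmul hP).mono <| by
    rintro _ ⟨n, rfl⟩
    refine ⟨smul_ne_zero (by omega) hP, (natDegree_smul_le _ _).trans hPk, ?_, ?_⟩
    · refine le_antisymm (natAbs_coeff_le_intPolyNorm _ _)
        ((intPolyNorm_zsmul_le _ _).trans (le_of_eq ?_))
      rw [← hlead, coeff_smul, smul_eq_mul, Int.natAbs_mul, Nat.cast_mul]
    · rw [map_zsmul, hPξ, smul_zero, abs_zero]
      exact Real.rpow_nonneg (intPolyNorm_nonneg _) _

lemma omegaExp_intCast_eq_top {k : ℕ} (hk : 1 ≤ k) (a : ℤ) : omegaExp k a = ⊤ :=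
  omegaExp_eq_top_of_aeval_eq_zero (X_sub_C_ne_zero a) ((natDegree_X_sub_C a).trans_le hk)
    (by simp)

lemma omegaLeadExp_eq_top_of_intCast_mul_eq_one {k : ℕ} (hk : 1 ≤ k) {q : ℤ} (hq : q ≠ 0)
    {η : ℝ} (hqη : (q : ℝ) * η = 1) : omegaLeadExp k η = ⊤ := by
  set P : ℤ[X] := C q * X ^ k - X ^ (k - 1)
  have hcoeff (j : ℕ) : P.coeff j = (if j = k then q else 0) - if j = k - 1 then 1 else 0 := by
    simp [P, coeff_X_pow]
  have hPk : P.coeff k = q := by rw [hcoeff, if_pos rfl, if_neg (by omega), sub_zero]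
  refine omegaLeadExp_eq_top_of_aeval_eq_zero (P := P) (fun h => hq ?_) ?_ ?_ ?_
  · rw [← hPk, h, coeff_zero]
  · exact natDegree_le_iff_coeff_eq_zero.mpr fun j hj => by
      rw [hcoeff, if_neg (by omega), if_neg (by omega), sub_zero]
  · refine le_antisymm (natAbs_coeff_le_intPolyNorm _ _)
      (intPolyNorm_le_of_forall (Nat.cast_nonneg _) fun j => ?_)
    rw [hcoeff, hPk, Nat.cast_le]
    split_ifs <;> omega
  · have hpow : η ^ k = η ^ (k - 1) * η := (pow_sub_one_mul (by omega) η).symm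
    simp only [P, map_sub, map_mul, map_pow, aeval_X, eq_intCast, map_intCast, hpow]
    linear_combination η ^ (k - 1) * hqη

lemma omegaExp_inv_le_omegaExp {k : ℕ} {M r : ℤ} (hM : M ≠ 0) {ξ : ℝ} (hξ : (r : ℝ) ≠ ξ) :
    omegaExp k (1 / (M * (ξ - r))) ≤ omegaExp k ξ := by
  set η : ℝ := 1 / (M * (ξ - r))
  have hMξ : (M : ℝ) * (ξ - r) ≠ 0 :=
    mul_ne_zero (Int.cast_ne_zero.mpr hM) (sub_ne_zero.mpr hξ.symm)
  have hη : (M : ℝ) * η * (ξ - r) = 1 := by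
    rw [mul_right_comm, mul_comm, one_div_mul_cancel hMξ]
  have hηk : |η| ^ k ≠ 0 := pow_ne_zero k (abs_ne_zero.mpr (one_div_ne_zero hMξ))
  refine sSup_image_toEReal_le_of_forall_lt fun ω hω ω' hω' =>
    ((heightComparable_taylor_scaledReflect k hM r).infinite_image_inter_approxSet subset_rfl hω
      (cv := (|η| ^ k)⁻¹) (by positivity) (fun Q hQ => ?_) hω').mono Set.inter_subset_right
  rw [← aeval_taylor_scaledReflect_mul_pow hQ.2.1 hη, abs_mul, abs_pow, mul_comm,
    mul_inv_cancel_right₀ hηk]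

lemma exists_omegaExp_le_omegaLeadExp {k : ℕ} {r : Fin (k + 1) → ℤ} {M : ℤ} (hM : 1 ≤ M)
    (hMr : ∀ P : ℤ[X], P.natDegree ≤ k →
      ∃ i, intPolyNorm (taylor (r i) P) ≤ M * |((P.eval (r i) : ℤ) : ℝ)|)
    {ξ : ℝ} (hξ : ∀ i, (r i : ℝ) ≠ ξ) :
    ∃ i, omegaExp k ξ ≤ omegaLeadExp k (1 / (M * (ξ - r i))) := by
  obtain ⟨i, hi⟩ :=
    exists_eq_ciSup_of_finite (f := fun i => omegaLeadExp k (1 / (M * (ξ - r i))))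
  refine ⟨i, hi ▸ sSup_image_toEReal_le_iSup_of_forall_lt fun ω hω ω' hω' => ?_⟩
  set A : Fin (k + 1) → Set ℤ[X] := fun i =>
    approxSet k ξ ω ∩ {P | intPolyNorm (taylor (r i) P) ≤ M * |((P.eval (r i) : ℤ) : ℝ)|}
  obtain ⟨i, hAi⟩ : ∃ i, (A i).Infinite := by
    by_contra! hfin
    exact hω ((Set.finite_iUnion hfin).subset fun P hP =>
      Set.mem_iUnion.mpr ((hMr P hP.2.1).imp fun i hi => ⟨hP, hi⟩))
  have hM0 : M ≠ 0 := by omega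
  have hξ' : ξ - r i ≠ 0 := sub_ne_zero.mpr (hξ i).symm
  have hη : (M : ℝ) * (1 / (M * (ξ - r i))) * (ξ - r i) = 1 := by
    rw [mul_right_comm, mul_comm, one_div_mul_cancel (mul_ne_zero (by exact_mod_cast hM0) hξ')]
  refine ⟨i, ((heightComparable_Qpoly k hM0 (r i)).infinite_image_inter_approxSet
    Set.inter_subset_left hAi (η := 1 / (M * (ξ - r i))) (cv := (|ξ - r i| ^ k)⁻¹)
    (by positivity) (fun P hP => ?_) hω').mono ?_⟩
  · rw [← aeval_Qpoly_mul_pow hP.1.2.1 hη, abs_mul, abs_pow, mul_comm (|_|),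
      inv_mul_cancel_left₀ (pow_ne_zero k (abs_ne_zero.mpr hξ'))]
  · rintro _ ⟨⟨P, hP, rfl⟩, hQ0, hQk, hQη⟩
    exact ⟨hQ0, hQk, natAbs_coeff_Qpoly_eq_intPolyNorm hM hP.2, hQη⟩

/-- **Main Theorem.** For `k ≥ 1` and distinct integers `r_0, …, r_k`, there is an integer
`M ≥ 1` such that for every real `ξ` there is an index `i` with `r_i ≠ ξ` for which
`ξ_i = 1/(M(ξ − r_i))` satisfies `ω_k^lead(ξ_i) = ω_k(ξ_i) = ω_k(ξ)`. -/
theorem mainThm (k : ℕ) (hk : 1 ≤ k) (r : Fin (k + 1) → ℤ) (hr : Function.Injective r) :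
    ∃ M : ℤ, 1 ≤ M ∧ ∀ ξ : ℝ, ∃ i : Fin (k + 1), (r i : ℝ) ≠ ξ ∧
      omegaLeadExp k (1 / (M * (ξ - r i))) = omegaExp k (1 / (M * (ξ - r i))) ∧
      omegaExp k (1 / (M * (ξ - r i))) = omegaExp k ξ := by
  obtain ⟨M, hM, hMr⟩ := exists_intPolyNorm_taylor_le_mul_abs_eval hr
  refine ⟨M, hM, fun ξ => ?_⟩
  by_cases hξ : ∀ i, (r i : ℝ) ≠ ξ
  · obtain ⟨i, hi⟩ := exists_omegaExp_le_omegaLeadExp hM hMr hξ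
    have hle := omegaExp_inv_le_omegaExp (k := k) (by omega : M ≠ 0) (hξ i)
    have hlead := omegaLeadExp_le_omegaExp k (1 / (M * (ξ - r i)))
    exact ⟨i, hξ i, hlead.antisymm (hle.trans hi), hle.antisymm (hi.trans hlead)⟩
  · obtain ⟨i₀, rfl⟩ := not_forall_not.mp hξ
    obtain ⟨i, hi⟩ := Fintype.exists_ne_of_one_lt_card (by rw [Fintype.card_fin]; omega) i₀
    have hlead : omegaLeadExp k (1 / (M * (r i₀ - r i))) = ⊤ :=
      omegaLeadExp_eq_top_of_intCast_mul_eq_one hk (q := M * (r i₀ - r i))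
        (mul_ne_zero (by omega) (sub_ne_zero.mpr (hr.ne hi.symm))) (by
          push_cast
          exact mul_one_div_cancel (mul_ne_zero (by positivity) (sub_ne_zero.mpr
            (Int.cast_injective.ne (hr.ne hi.symm)))))
    have htop := top_le_iff.mp (hlead ▸ omegaLeadExp_le_omegaExp k _)
    exact ⟨i, Int.cast_injective.ne (hr.ne hi), hlead.trans htop.symm,
      htop.trans (omegaExp_intCast_eq_top hk _).symm⟩
end

section
/- Let n ≥ 1 be an integer, let ξ be an irrational real number, let r be an integer with r ≠ ξ, and let M ≥ 1 be an integer. Then λ_n(1/(M(ξ − r))) = λ_n(ξ); that is, λ_n is invariant under this fractional linear transformation with rational coefficients. -/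
open Polynomial Filter

open Topology

/-!
Let `A` be the integer matrix whose `m`-th row lists the coefficients of
`(aX + b)ᵐ (cX + d)ⁿ⁻ᵐ`. It maps the moment vector `(1, ξ, …, ξⁿ)` to `(cξ + d)ⁿ (1, η, …, ηⁿ)`
with `η = (aξ + b)/(cξ + d)`. Hence, if `x ∈ ℤⁿ⁺¹` is within `‖x‖^(-λ)` of `x₀ (1, ξ, …, ξⁿ)`,
then `A x` is within a constant times `‖x‖^(-λ)` of `(A x)₀ (1, η, …, ηⁿ)`, while
`‖x‖ ≪ ‖A x‖ ≪ ‖x‖`. Losing an arbitrarily small amount of the exponent absorbs the constants,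
so `λₙ(ξ) ≤ λₙ(η)` for every such Möbius map, and `ξ ↦ 1/(M(ξ - r))` and its inverse are both
of this form.
-/

def powVec (n : ℕ) (ξ : ℝ) : Fin (n + 1) → ℝ := fun j => ξ ^ (j : ℕ)

lemma powVec_zero (n : ℕ) (ξ : ℝ) : powVec n ξ 0 = 1 := by
  simp [powVec]

def lambdaSet (n : ℕ) (ξ l : ℝ) : Set (Fin (n + 1) → ℤ) :=
  {x | x ≠ 0 ∧ ‖(x 0 : ℝ) • powVec n ξ - Int.cast ∘ x‖ ≤ ‖x‖ ^ (-l)}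

lemma one_le_norm_of_ne_zero {ι : Type*} [Fintype ι] {x : ι → ℤ} (hx : x ≠ 0) : 1 ≤ ‖x‖ := by
  obtain ⟨i, hi⟩ := Function.ne_iff.1 hx
  calc (1 : ℝ) ≤ |(x i : ℝ)| := by exact_mod_cast Int.one_le_abs hi
    _ = ‖x i‖ := (Int.norm_eq_abs _).symm
    _ ≤ ‖x‖ := norm_le_pi_norm x i

lemma vecNorm_eq_norm {n : ℕ} (x : Fin (n + 1) → ℤ) : vecNorm x = ‖x‖ := by
  apply le_antisymm
  · obtain ⟨i, -, hi⟩ := Finset.exists_mem_eq_sup Finset.univ Finset.univ_nonempty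
      fun i => (x i).natAbs
    unfold vecNorm
    rw [hi, Nat.cast_natAbs, Int.cast_abs, ← Int.norm_eq_abs]
    exact norm_le_pi_norm x i
  · refine (pi_norm_le_iff_of_nonneg (Nat.cast_nonneg _)).2 fun i => ?_
    rw [Int.norm_eq_abs, ← Int.cast_abs, ← Nat.cast_natAbs, Nat.cast_le]
    exact Finset.le_sup (f := fun i => (x i).natAbs) (Finset.mem_univ i)

lemma norm_smul_powVec_sub_le_iff {n : ℕ} (ξ : ℝ) (u : Fin (n + 1) → ℝ) {ε : ℝ} (hε : 0 ≤ ε) :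
    ‖u 0 • powVec n ξ - u‖ ≤ ε ↔
      ∀ m : Fin (n + 1), 1 ≤ (m : ℕ) → |u 0 * ξ ^ (m : ℕ) - u m| ≤ ε := by
  simp [pi_norm_le_iff_of_nonneg hε, Fin.forall_fin_succ, powVec, hε]

lemma lambdaExp_eq_sSup_lambdaSet (n : ℕ) (ξ : ℝ) :
    lambdaExp n ξ = sSup (Real.toEReal '' {l | (lambdaSet n ξ l).Infinite}) := by
  unfold lambdaExp lambdaSet
  congr! 6 with l
  funext x
  rw [vecNorm_eq_norm]
  exact propext <| and_congr_right fun _ =>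
    (norm_smul_powVec_sub_le_iff ξ (Int.cast ∘ x) (Real.rpow_nonneg (norm_nonneg _) _)).symm

lemma lambdaSet_infinite_of_nonpos (n : ℕ) (ξ : ℝ) {l : ℝ} (hl : l ≤ 0) :
    (lambdaSet n ξ l).Infinite := by
  let x (N : ℕ) : Fin (n + 1) → ℤ := fun m => round (((N : ℝ) + 1) * ξ ^ (m : ℕ))
  have hx0 (N : ℕ) : x N 0 = N + 1 := by
    simp only [x, Fin.val_zero, pow_zero, mul_one]
    exact_mod_cast round_natCast (N + 1)
  refine Set.infinite_of_injective_forall_mem (f := x) (fun N N' h => ?_) fun N => ?_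
  · simpa [hx0] using congrFun h 0
  · have hne : x N ≠ 0 := fun h => by
      have := congrFun h 0
      rw [hx0, Pi.zero_apply] at this
      omega
    refine ⟨hne, ?_⟩
    calc ‖((x N 0 : ℤ) : ℝ) • powVec n ξ - Int.cast ∘ x N‖ ≤ 1 / 2 := by
          refine (pi_norm_le_iff_of_nonneg (by norm_num)).2 fun m => ?_
          rw [Real.norm_eq_abs, Pi.sub_apply, Pi.smul_apply]
          simpa [hx0, powVec, x] using abs_sub_round (((N : ℝ) + 1) * ξ ^ (m : ℕ))
      _ ≤ 1 := by norm_num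
      _ ≤ ‖x N‖ ^ (-l) := Real.one_le_rpow (one_le_norm_of_ne_zero hne) (by linarith)

lemma lambdaExp_le_of_forall_infinite {n : ℕ} {ξ η : ℝ}
    (h : ∀ l l' : ℝ, 0 < l' → l' < l → (lambdaSet n ξ l).Infinite → (lambdaSet n η l').Infinite) :
    lambdaExp n ξ ≤ lambdaExp n η := by
  rw [lambdaExp_eq_sSup_lambdaSet, lambdaExp_eq_sSup_lambdaSet]
  refine sSup_le ?_
  rintro _ ⟨l, hl, rfl⟩
  refine le_of_forall_lt fun z hz => ?_
  obtain ⟨q, hzq, hql⟩ := EReal.lt_iff_exists_real_btwn.1 hz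
  refine hzq.trans_le (le_sSup ⟨q, ?_, rfl⟩)
  rcases le_or_gt q 0 with hq | hq
  · exact lambdaSet_infinite_of_nonpos n η hq
  · exact h l q hq (EReal.coe_lt_coe_iff.1 hql) hl

lemma eventually_mul_rpow_neg_le {l l' : ℝ} (hll' : l' < l) (C : ℝ) {K : ℝ} (hK : 0 < K) :
    ∀ᶠ X in atTop, C * X ^ (-l) ≤ (K * X) ^ (-l') := by
  have hlim : Tendsto (fun X : ℝ => C * X ^ (-(l - l'))) atTop (𝓝 0) := by
    simpa using (tendsto_rpow_neg_atTop (sub_pos.2 hll')).const_mul C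
  filter_upwards [hlim.eventually (ge_mem_nhds (Real.rpow_pos_of_pos hK (-l'))),
    eventually_gt_atTop 0] with X hX hX0
  calc C * X ^ (-l) = C * X ^ (-(l - l')) * X ^ (-l') := by
        rw [mul_assoc, ← Real.rpow_add hX0]; ring_nf
    _ ≤ K ^ (-l') * X ^ (-l') := by gcongr
    _ = (K * X) ^ (-l') := (Real.mul_rpow hK.le hX0.le).symm

section Approximation

open Matrix

variable {ι κ : Type*} [Fintype ι] [Fintype κ]

lemma abs_sub_le_of_norm_smul_sub_le {p u : ι → ℝ} {i : ι} (hp : p i = 1) {t δ : ℝ}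
    (h : ‖t • p - u‖ ≤ δ) : |t - u i| ≤ δ := by
  simpa [hp] using (norm_le_pi_norm (t • p - u) i).trans h

lemma norm_smul_sub_le_of_norm_smul_sub_le {p u : ι → ℝ} {i : ι} (hp : p i = 1) {t δ : ℝ}
    (h : ‖t • p - u‖ ≤ δ) : ‖u i • p - u‖ ≤ (‖p‖ + 1) * δ := by
  have hi : |u i - t| ≤ δ := by
    rw [abs_sub_comm]; exact abs_sub_le_of_norm_smul_sub_le hp h
  calc ‖u i • p - u‖ = ‖(u i - t) • p + (t • p - u)‖ := by congr 1; module
    _ ≤ |u i - t| * ‖p‖ + δ := by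
        grw [norm_add_le, norm_smul, Real.norm_eq_abs, h]
    _ ≤ (‖p‖ + 1) * δ := by nlinarith [norm_nonneg p]

attribute [local instance] Matrix.linftyOpNormedAddCommGroup

lemma norm_smul_sub_mulVec_le {B : Matrix κ ι ℝ} {p u : ι → ℝ} {q : κ → ℝ} {w : ℝ}
    (hB : B *ᵥ p = w • q) {t ε : ℝ} (h : ‖t • p - u‖ ≤ ε) :
    ‖(t * w) • q - B *ᵥ u‖ ≤ ‖B‖ * ε := by
  calc ‖(t * w) • q - B *ᵥ u‖ = ‖B *ᵥ (t • p - u)‖ := by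
        rw [Matrix.mulVec_sub, Matrix.mulVec_smul, hB, smul_smul]
    _ ≤ ‖B‖ * ‖t • p - u‖ := Matrix.linfty_opNorm_mulVec B _
    _ ≤ ‖B‖ * ε := by gcongr

variable {n : ℕ} {ξ η w : ℝ} {A : Matrix (Fin (n + 1)) (Fin (n + 1)) ℤ}
  {l l' : ℝ} {x : Fin (n + 1) → ℤ}

lemma intCast_comp_mulVec (A : Matrix (Fin (n + 1)) (Fin (n + 1)) ℤ) (x : Fin (n + 1) → ℤ) :
    (Int.cast ∘ (A *ᵥ x) : Fin (n + 1) → ℝ) = A.map Int.cast *ᵥ (Int.cast ∘ x) :=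
  funext (RingHom.map_mulVec (Int.castRingHom ℝ) A x)

lemma lt_norm_mulVec (hA : A.map (Int.cast : ℤ → ℝ) *ᵥ powVec n ξ = w • powVec n η)
    (hw : w ≠ 0) (hl : 0 ≤ l) (hx : x ∈ lambdaSet n ξ l) {R : ℝ}
    (hlarge : ‖powVec n ξ‖ * (R + ‖A.map (Int.cast : ℤ → ℝ)‖) / |w| + 1 < ‖x‖) :
    R < ‖A *ᵥ x‖ := by
  set B := A.map (Int.cast : ℤ → ℝ)
  obtain ⟨hx0, happrox⟩ := hx
  have hε : ‖x‖ ^ (-l) ≤ 1 :=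
    Real.rpow_le_one_of_one_le_of_nonpos (one_le_norm_of_ne_zero hx0) (neg_nonpos.2 hl)
  have hp : 1 ≤ ‖powVec n ξ‖ := by
    simpa [powVec_zero] using norm_le_pi_norm (powVec n ξ) 0
  have hx_le : ‖x‖ ≤ |(x 0 : ℝ)| * ‖powVec n ξ‖ + 1 := by
    have := norm_le_norm_add_norm_sub ((x 0 : ℝ) • powVec n ξ) (Int.cast ∘ x)
    rw [norm_smul, Real.norm_eq_abs] at this
    exact this.trans (by gcongr; exact happrox.trans hε)
  have hx0_large : R + ‖B‖ < |(x 0 : ℝ) * w| := by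
    rw [abs_mul, ← div_lt_iff₀ (abs_pos.2 hw)]
    refine lt_of_mul_lt_mul_left ?_ (zero_le_one.trans hp)
    rw [← mul_div_assoc]
    linarith
  have hcoord := abs_sub_le_of_norm_smul_sub_le (powVec_zero n η)
    (norm_smul_sub_mulVec_le hA happrox)
  calc R < |(x 0 : ℝ) * w| - ‖B‖ * 1 := by linarith
    _ ≤ |(x 0 : ℝ) * w| - ‖B‖ * ‖x‖ ^ (-l) := by gcongr
    _ ≤ |(B *ᵥ Int.cast ∘ x) 0| := by
        linarith [abs_sub_abs_le_abs_sub ((x 0 : ℝ) * w) ((B *ᵥ Int.cast ∘ x) 0)]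
    _ ≤ ‖A *ᵥ x‖ := by
        rw [← intCast_comp_mulVec]; exact norm_le_pi_norm (Int.cast ∘ (A *ᵥ x) : _ → ℝ) 0

lemma mulVec_mem_lambdaSet (hA : A.map (Int.cast : ℤ → ℝ) *ᵥ powVec n ξ = w • powVec n η)
    (hl' : 0 ≤ l') (hx : x ∈ lambdaSet n ξ l) (hpos : 0 < ‖A *ᵥ x‖)
    (hdecay : (‖powVec n η‖ + 1) * ‖A.map (Int.cast : ℤ → ℝ)‖ * ‖x‖ ^ (-l) ≤
      (‖A.map (Int.cast : ℤ → ℝ)‖ * ‖x‖) ^ (-l')) :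
    A *ᵥ x ∈ lambdaSet n η l' := by
  refine ⟨norm_pos_iff.1 hpos, ?_⟩
  have hv := intCast_comp_mulVec A x
  have hnorm : ‖A *ᵥ x‖ ≤ ‖A.map (Int.cast : ℤ → ℝ)‖ * ‖x‖ := by
    change ‖(Int.cast ∘ (A *ᵥ x) : _ → ℝ)‖ ≤ _
    rw [hv]; exact Matrix.linfty_opNorm_mulVec _ _
  calc ‖((A *ᵥ x) 0 : ℝ) • powVec n η - Int.cast ∘ (A *ᵥ x)‖
      = ‖(Int.cast ∘ (A *ᵥ x) : _ → ℝ) 0 • powVec n η - Int.cast ∘ (A *ᵥ x)‖ := rfl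
    _ ≤ (‖powVec n η‖ + 1) * (‖A.map (Int.cast : ℤ → ℝ)‖ * ‖x‖ ^ (-l)) := by
        rw [hv]
        exact norm_smul_sub_le_of_norm_smul_sub_le (powVec_zero n η)
          (norm_smul_sub_mulVec_le hA hx.2)
    _ ≤ (‖A.map (Int.cast : ℤ → ℝ)‖ * ‖x‖) ^ (-l') := by rw [← mul_assoc]; exact hdecay
    _ ≤ ‖A *ᵥ x‖ ^ (-l') := Real.rpow_le_rpow_of_nonpos hpos hnorm (neg_nonpos.2 hl')

theorem lambdaSet_infinite_of_mulVec_powVec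
    (hA : A.map (Int.cast : ℤ → ℝ) *ᵥ powVec n ξ = w • powVec n η) (hw : w ≠ 0)
    (hl' : 0 < l') (hll' : l' < l) (h : (lambdaSet n ξ l).Infinite) :
    (lambdaSet n η l').Infinite := by
  have hB : 0 < ‖A.map (Int.cast : ℤ → ℝ)‖ := norm_pos_iff.2 fun hB => hw <| by
    simpa [hB, powVec_zero] using (congrFun hA 0).symm
  have hnorm : Tendsto (fun x : Fin (n + 1) → ℤ => ‖x‖) cofinite atTop := by
    rw [← cocompact_eq_cofinite]; exact tendsto_norm_cocompact_atTop
  refine Set.Infinite.of_image (‖·‖) <| Set.infinite_of_not_bddAbove <|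
    not_bddAbove_iff.2 fun R => ?_
  obtain ⟨x, hx, hlarge, hdecay⟩ := ((frequently_cofinite_iff_infinite.2 h).and_eventually
    (hnorm.eventually ((eventually_gt_atTop _).and (eventually_mul_rpow_neg_le hll' _ hB)))).exists
  have hR := lt_norm_mulVec hA hw (hl'.le.trans hll'.le) hx (R := max R 0) hlarge
  exact ⟨_, ⟨A *ᵥ x, mulVec_mem_lambdaSet hA hl'.le hx ((le_max_right _ _).trans_lt hR) hdecay,
    rfl⟩, (le_max_left _ _).trans_lt hR⟩

end Approximation

noncomputable def mobiusMatrix (n : ℕ) (a b c d : ℤ) : Matrix (Fin (n + 1)) (Fin (n + 1)) ℤ :=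
  Matrix.of fun m j => ((C a * X + C b) ^ (m : ℕ) * (C c * X + C d) ^ (n - m)).coeff j

open Matrix in
lemma mobiusMatrix_mulVec_powVec (n : ℕ) (a b c d : ℤ) {ξ : ℝ} (hcd : (c : ℝ) * ξ + d ≠ 0) :
    (mobiusMatrix n a b c d).map (Int.cast : ℤ → ℝ) *ᵥ powVec n ξ =
      ((c : ℝ) * ξ + d) ^ n • powVec n ((a * ξ + b) / (c * ξ + d)) := by
  funext m
  set P := (C a * X + C b) ^ (m : ℕ) * (C c * X + C d) ^ (n - m) with hP
  have hdeg : P.natDegree < n + 1 := by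
    rw [Nat.lt_succ_iff, hP]
    compute_degree
    omega
  have hsum : ∑ j : Fin (n + 1), (P.coeff j : ℝ) * ξ ^ (j : ℕ) = aeval ξ P := by
    simp [aeval_eq_sum_range' hdeg, Fin.sum_univ_eq_sum_range (fun j => (P.coeff j : ℝ) * ξ ^ j)]
  simp only [mulVec, dotProduct, map_apply, mobiusMatrix, of_apply, powVec, Pi.smul_apply,
    smul_eq_mul]
  rw [hsum]
  have hsplit :
      ((c : ℝ) * ξ + d) ^ n = ((c : ℝ) * ξ + d) ^ (m : ℕ) * ((c : ℝ) * ξ + d) ^ (n - m) := by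
    rw [← pow_add, Nat.add_sub_cancel' m.is_le]
  simp only [P, map_mul, map_pow, map_add, aeval_X, eq_intCast, map_intCast]
  rw [hsplit, div_pow, mul_right_comm, mul_div_cancel₀ _ (pow_ne_zero _ hcd), mul_comm]

theorem lambdaExp_le_lambdaExp_mobius (n : ℕ) (ξ : ℝ) (a b c d : ℤ) (hcd : (c : ℝ) * ξ + d ≠ 0) :
    lambdaExp n ξ ≤ lambdaExp n ((a * ξ + b) / (c * ξ + d)) :=
  lambdaExp_le_of_forall_infinite fun _ _ hl' hll' =>
    lambdaSet_infinite_of_mulVec_powVec (mobiusMatrix_mulVec_powVec n a b c d hcd)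
      (pow_ne_zero n hcd) hl' hll'

theorem lambdaInvariant_general (n : ℕ) (ξ : ℝ)
    (r : ℤ) (hr : (r : ℝ) ≠ ξ) (M : ℤ) (hM : 1 ≤ M) :
    lambdaExp n (1 / (M * (ξ - r))) = lambdaExp n ξ := by
  have hM0 : (M : ℝ) ≠ 0 := by exact_mod_cast (by omega : M ≠ 0)
  have hξr : ξ - r ≠ 0 := sub_ne_zero.2 hr.symm
  apply le_antisymm
  · have := lambdaExp_le_lambdaExp_mobius n (1 / (M * (ξ - r))) (r * M) 1 M 0
      (by simp [hM0, hξr])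
    convert this using 2
    field_simp
    push_cast
    ring
  · have := lambdaExp_le_lambdaExp_mobius n ξ 0 1 M (-(M * r)) (by
      push_cast
      rw [← sub_eq_add_neg, ← mul_sub]
      exact mul_ne_zero hM0 hξr)
    convert this using 2
    push_cast
    ring

/-- `λ_n` is invariant under the fractional linear transformation
`ξ ↦ 1/(M(ξ − r))`. -/
theorem lambdaInvariant (n : ℕ) (hn : 1 ≤ n) (ξ : ℝ) (hξ : Irrational ξ)
    (r : ℤ) (hr : (r : ℝ) ≠ ξ) (M : ℤ) (hM : 1 ≤ M) :
    lambdaExp n (1 / (M * (ξ - r))) = lambdaExp n ξ :=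
  lambdaInvariant_general n ξ r hr M hM
end
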